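/- Let m ≥ 2 be an integer and p = 1/m. Let μ be the product probability measure on {0,1}^ℤ under which the coordinates are i.i.d. Bernoulli(p) (value 1 = heads with probability p), and let μ₀ be μ conditioned on the event {ω : ω(0) = 0}. Define T_*(ω) = min{n ≥ 0 : #{k ∈ [0,n] : ω(k) = 0} ≤ (m−1)·#{k ∈ [0,n] : ω(k) = 1}}. Then for every 0 ≤ β < 1/2, ∫ T_*(ω)^β dμ₀(ω) < ∞. -/

import Mathlib

/-!
Let `S t = (m - 1) · #heads - #tails` among the coins `ω 0, …, ω (t - 1)`. On `{n < T}` the walk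
stays negative, `S t < 0` for `0 < t ≤ n + 1`. By the cycle lemma at most `|S (n + 1)|` of the
`n + 1` cyclic rotations of the word `ω 0 ⋯ ω n` have this property; rotations preserve the
Bernoulli weights, so `P(n < T) ≤ E|S (n + 1)| / (n + 1) ≤ √((m - 1) / (n + 1))`, because for
`p = 1 / m` the increments are centred with variance `m - 1`. Conditioning on `ω 0 = false` costs
a factor `(1 - p)⁻¹`, and summation by parts, `E T^β ≤ 1 + ∑ₖ (k + 1)^(β - 1) P(k < T)`, turns the
`n^(-1/2)` tail into finite `β`-moments for `β < 1/2`.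
-/

open MeasureTheory ProbabilityTheory
open scoped ENNReal

namespace ExtraHead

open Finset

section Moments

variable {β : ℝ}

lemma rpow_add_one_sub_rpow_le (hβ₀ : 0 ≤ β) (hβ₁ : β ≤ 1) {x : ℝ} (hx : 0 ≤ x) :
    (x + 1) ^ β - x ^ β ≤ (x + 1) ^ (β - 1) := by
  have hx₁ : 0 < x + 1 := by linarith
  -- `y ≤ y ^ β` for `y = x / (x + 1) ∈ [0, 1]`
  have hy := Real.rpow_le_rpow_of_exponent_ge' (div_nonneg hx hx₁.le)
    (div_le_one_of_le₀ (by linarith) hx₁.le) hβ₀ hβ₁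
  rw [Real.rpow_one, Real.div_rpow hx hx₁.le,
    div_le_div_iff₀ hx₁ (Real.rpow_pos_of_pos hx₁ β)] at hy
  rw [Real.rpow_sub_one hx₁.ne', le_div_iff₀ hx₁]
  nlinarith

lemma natCast_rpow_le_one_add_sum (hβ₀ : 0 ≤ β) (hβ₁ : β ≤ 1) (n : ℕ) :
    (n : ℝ) ^ β ≤ 1 + ∑ k ∈ range n, ((k : ℝ) + 1) ^ (β - 1) := by
  induction n with
  | zero => simpa using Real.zero_rpow_le_one β
  | succ n ih =>
    rw [sum_range_succ, Nat.cast_succ]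
    linarith [rpow_add_one_sub_rpow_le hβ₀ hβ₁ (Nat.cast_nonneg n)]

lemma summable_rpow_sub_one_mul_div_sqrt (hβ : β < 1 / 2) (C : ℝ) :
    Summable fun k : ℕ => ((k : ℝ) + 1) ^ (β - 1) * (C / √((k : ℝ) + 1)) := by
  have h (k : ℕ) : ((k : ℝ) + 1) ^ (β - 1) * (C / √((k : ℝ) + 1))
      = C * ((k + 1 : ℕ) : ℝ) ^ (β - 3 / 2) := by
    have hk : (0 : ℝ) < k + 1 := by positivity
    rw [Real.sqrt_eq_rpow, mul_div_left_comm, ← Real.rpow_sub hk]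
    push_cast
    ring_nf
  simp_rw [h]
  exact ((summable_nat_add_iff 1).2 (Real.summable_nat_rpow.2 (by linarith))).mul_left C

theorem lintegral_rpow_lt_top_of_measure_le {α : Type*} [MeasurableSpace α] (μ : Measure α)
    [IsFiniteMeasure μ] {X : α → ℕ} {B : ℕ → Set α} (hB : ∀ k, MeasurableSet (B k))
    (hXB : ∀ k, {a | k < X a} ⊆ B k) {C : ℝ} (hC₀ : 0 ≤ C)
    (hC : ∀ k : ℕ, μ (B k) ≤ ENNReal.ofReal (C / √(k + 1))) (hβ₀ : 0 ≤ β) (hβ : β < 1 / 2) :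
    ∫⁻ a, (X a : ℝ≥0∞) ^ β ∂μ < ∞ := by
  set w : ℕ → ℝ := fun k => ((k : ℝ) + 1) ^ (β - 1)
  have hw (k : ℕ) : 0 ≤ w k := by positivity
  have hpoint (a : α) :
      (X a : ℝ≥0∞) ^ β ≤ 1 + ∑' k, (B k).indicator (fun _ => ENNReal.ofReal (w k)) a := by
    calc (X a : ℝ≥0∞) ^ β = ENNReal.ofReal ((X a : ℝ) ^ β) := by
          rw [← ENNReal.ofReal_rpow_of_nonneg (Nat.cast_nonneg _) hβ₀, ENNReal.ofReal_natCast]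
      _ ≤ ENNReal.ofReal (1 + ∑ k ∈ range (X a), w k) :=
          ENNReal.ofReal_le_ofReal (natCast_rpow_le_one_add_sum hβ₀ (by linarith) _)
      _ = 1 + ∑ k ∈ range (X a), ENNReal.ofReal (w k) := by
          rw [ENNReal.ofReal_add zero_le_one (sum_nonneg fun k _ => hw k),
            ENNReal.ofReal_sum_of_nonneg fun k _ => hw k, ENNReal.ofReal_one]
      _ ≤ 1 + ∑' k, (B k).indicator (fun _ => ENNReal.ofReal (w k)) a := by
          gcongr
          refine (sum_le_sum fun k hk => ?_).trans (ENNReal.sum_le_tsum _)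
          rw [Set.indicator_of_mem (hXB k (by simpa using hk))]
  calc ∫⁻ a, (X a : ℝ≥0∞) ^ β ∂μ
      ≤ ∫⁻ a, 1 + ∑' k, (B k).indicator (fun _ => ENNReal.ofReal (w k)) a ∂μ :=
        lintegral_mono hpoint
    _ = μ Set.univ + ∑' k, ENNReal.ofReal (w k) * μ (B k) := by
        rw [lintegral_add_left measurable_const,
          lintegral_tsum fun k => (measurable_const.indicator (hB k)).aemeasurable]
        simp [lintegral_indicator_const (hB _)]
    _ ≤ μ Set.univ + ∑' k : ℕ, ENNReal.ofReal (w k * (C / √(k + 1))) := by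
        gcongr with k
        rw [ENNReal.ofReal_mul (hw k)]
        gcongr
        exact hC k
    _ < ∞ := by
        rw [← ENNReal.ofReal_tsum_of_nonneg (fun k => by positivity)
          (summable_rpow_sub_one_mul_div_sqrt hβ C)]
        exact ENNReal.add_lt_top.2 ⟨measure_lt_top μ _, ENNReal.ofReal_lt_top⟩

end Moments

def StaysBelowAfter (s : ℕ → ℤ) (N j : ℕ) : Prop :=
  ∀ t ∈ Ioc 0 N, s (j + t) < s j

instance (s : ℕ → ℤ) (N : ℕ) : DecidablePred (StaysBelowAfter s N) :=
  fun _ => inferInstanceAs (Decidable (∀ _ ∈ _, _))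

lemma StaysBelowAfter.lt_of_lt {s : ℕ → ℤ} {N j j' : ℕ} (hj : StaysBelowAfter s N j)
    (hjj' : j < j') (hj'N : j' ≤ j + N) : s j' < s j := by
  simpa [Nat.add_sub_cancel' hjj'.le] using hj (j' - j) (mem_Ioc.2 ⟨by omega, by omega⟩)

/-- The cycle lemma of Dvoretzky and Motzkin. -/
lemma card_staysBelowAfter_le (s : ℕ → ℤ) (N : ℕ) (d : ℤ) (hper : ∀ t, s (t + N) = s t + d) :
    #{j ∈ range N | StaysBelowAfter s N j} ≤ (-d).toNat := by
  set G := {j ∈ range N | StaysBelowAfter s N j}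
  rcases G.eq_empty_or_nonempty with hG | hG
  · simp [hG]
  have hmem : ∀ {j}, j ∈ G → j < N ∧ StaysBelowAfter s N j := by
    intro j hj; simpa [G] using hj
  set j₀ := G.min' hG
  have hanti : StrictAntiOn s G := fun a ha b hb hab =>
    (hmem ha).2.lt_of_lt hab (by have := (hmem hb).1; omega)
  -- the values at good times lie in the window of length `-d` below `s j₀`,
  -- since `s (j₀ + N) = s j₀ + d` is already below all of them
  have hwindow : Set.MapsTo s G (Ioc (s j₀ + d) (s j₀)) := by
    intro j hj
    have hle : j₀ ≤ j := G.min'_le j hj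
    have hlow : s (j₀ + N) < s j := (hmem hj).2.lt_of_lt (by have := (hmem hj).1; omega) (by omega)
    rw [hper] at hlow
    refine mem_Ioc.2 ⟨hlow, ?_⟩
    rcases hle.eq_or_lt with h | h
    · rw [h]
    · exact (hanti (G.min'_mem hG) hj h).le
  simpa [Int.card_Ioc] using card_le_card_of_injOn s hwindow hanti.injOn

section Walk

variable {N : ℕ}

def step (m : ℕ) (b : Bool) : ℤ := if b then (m : ℤ) - 1 else -1

/-- Since `i : ℕ` is read in `ZMod N`, this is the walk of the periodic extension of `v`. -/
def walk (m : ℕ) (v : ZMod N → Bool) (t : ℕ) : ℤ := ∑ i ∈ range t, step m (v i)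

def rotate (c : ZMod N) (v : ZMod N → Bool) : ZMod N → Bool := fun i => v (i + c)

lemma rotate_zero (v : ZMod N → Bool) : rotate 0 v = v :=
  funext fun _ => by simp [rotate]

lemma walk_zero (m : ℕ) (v : ZMod N → Bool) : walk m v 0 = 0 := rfl

lemma walk_add (m : ℕ) (v : ZMod N → Bool) (a b : ℕ) :
    walk m v (a + b) = walk m v a + walk m (rotate a v) b := by
  simp only [walk, sum_range_add, rotate, Nat.cast_add, add_comm (a : ZMod N)]

lemma walk_eq_sum [NeZero N] (m : ℕ) (v : ZMod N → Bool) : walk m v N = ∑ i, step m (v i) :=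
  sum_nbij' (↑) ZMod.val (by simp) (by simp [ZMod.val_lt])
    (fun a ha => by simp [Nat.mod_eq_of_lt (mem_range.1 ha)]) (by simp) (by simp)

lemma walk_add_period (m : ℕ) (v : ZMod N → Bool) (t : ℕ) :
    walk m v (t + N) = walk m v t + walk m v N := by
  rw [add_comm, walk_add, add_comm, ZMod.natCast_self, rotate_zero]

lemma staysBelowAfter_walk_iff (m : ℕ) (v : ZMod N → Bool) (j : ℕ) :
    StaysBelowAfter (walk m v) N j ↔ StaysBelowAfter (walk m (rotate j v)) N 0 := by
  simp [StaysBelowAfter, walk_add, walk_zero]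

lemma card_staysBelowAfter_walk_le (m : ℕ) (v : ZMod N → Bool) :
    (#{j ∈ range N | StaysBelowAfter (walk m v) N j} : ℤ) ≤ |walk m v N| := by
  have := card_staysBelowAfter_le _ _ _ (walk_add_period m v)
  have := neg_le_abs (walk m v N)
  have := abs_nonneg (walk m v N)
  omega

end Walk

section WordWeight

variable {ι : Type*} [Fintype ι]

def coinWeight (p : ℝ) (b : Bool) : ℝ := if b then p else 1 - p

def wordWeight (p : ℝ) (v : ι → Bool) : ℝ := ∏ i, coinWeight p (v i)

lemma coinWeight_nonneg {p : ℝ} (hp₀ : 0 ≤ p) (hp₁ : p ≤ 1) (b : Bool) : 0 ≤ coinWeight p b := by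
  cases b <;> simp [coinWeight] <;> linarith

lemma wordWeight_nonneg {p : ℝ} (hp₀ : 0 ≤ p) (hp₁ : p ≤ 1) (v : ι → Bool) : 0 ≤ wordWeight p v :=
  prod_nonneg fun i _ => coinWeight_nonneg hp₀ hp₁ (v i)

variable [DecidableEq ι]

lemma sum_wordWeight_mul_comp_perm (p : ℝ) (σ : Equiv.Perm ι) (F : (ι → Bool) → ℝ) :
    ∑ v, wordWeight p v * F (v ∘ σ) = ∑ v, wordWeight p v * F v := by
  refine Fintype.sum_equiv (σ.symm.arrowCongr (Equiv.refl Bool)) _ _ fun v => ?_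
  change _ = wordWeight p (v ∘ σ) * F (v ∘ σ)
  rw [wordWeight, wordWeight, Function.comp_def, Equiv.prod_comp σ fun i => coinWeight p (v i)]

lemma sum_wordWeight_mul_prod (p : ℝ) (g : ι → Bool → ℝ) :
    ∑ v, wordWeight p v * ∏ i, g i (v i) = ∏ i, (p * g i true + (1 - p) * g i false) := by
  simp only [wordWeight, ← prod_mul_distrib]
  rw [← Fintype.prod_sum fun i b => coinWeight p b * g i b]
  simp [coinWeight]

lemma sum_wordWeight (p : ℝ) : ∑ v : ι → Bool, wordWeight p v = 1 := by
  simpa using sum_wordWeight_mul_prod (ι := ι) p fun _ _ => 1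

lemma sum_wordWeight_mul_mul {p : ℝ} {f : Bool → ℝ} (hf : p * f true + (1 - p) * f false = 0)
    (i j : ι) :
    ∑ v, wordWeight p v * (f (v i) * f (v j))
      = if i = j then p * f true ^ 2 + (1 - p) * f false ^ 2 else 0 := by
  have hprod : ∀ v : ι → Bool, f (v i) * f (v j)
      = ∏ k, (if k = i then f (v k) else 1) * (if k = j then f (v k) else 1) := by
    intro v
    rw [prod_mul_distrib, Fintype.prod_ite_eq', Fintype.prod_ite_eq']
  rw [sum_congr rfl fun v _ => congrArg (wordWeight p v * ·) (hprod v),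
    sum_wordWeight_mul_prod p fun k b => (if k = i then f b else 1) * (if k = j then f b else 1)]
  split_ifs with hij
  · subst hij
    rw [prod_eq_single i (fun k _ hk => by simp [hk]) (by simp)]
    simp [sq]
  · exact prod_eq_zero (mem_univ i) (by simpa [hij] using hf)

lemma sum_wordWeight_mul_sum_sq {p : ℝ} {f : Bool → ℝ} (hf : p * f true + (1 - p) * f false = 0) :
    ∑ v : ι → Bool, wordWeight p v * (∑ i, f (v i)) ^ 2
      = Fintype.card ι * (p * f true ^ 2 + (1 - p) * f false ^ 2) := by
  simp_rw [sq (∑ i, _), sum_mul_sum, mul_sum]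
  rw [sum_comm]
  simp_rw [sum_comm (s := univ (α := ι → Bool)), sum_wordWeight_mul_mul hf]
  simp [mul_add]

end WordWeight

section Ballot

variable {N : ℕ} [NeZero N]

lemma card_mul_sum_wordWeight_staysBelowAfter (m : ℕ) (p : ℝ) :
    (N : ℝ) * ∑ v : ZMod N → Bool with StaysBelowAfter (walk m v) N 0, wordWeight p v
      = ∑ v : ZMod N → Bool, wordWeight p v * #{j ∈ range N | StaysBelowAfter (walk m v) N j} := by
  have hrot (j : ℕ) :
      ∑ v : ZMod N → Bool, wordWeight p v * (if StaysBelowAfter (walk m v) N j then 1 else 0 : ℝ)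
        = ∑ v : ZMod N → Bool,
            wordWeight p v * if StaysBelowAfter (walk m v) N 0 then 1 else 0 := by
    simp_rw [staysBelowAfter_walk_iff m _ j]
    exact sum_wordWeight_mul_comp_perm p (Equiv.addRight (j : ZMod N))
      fun v => if StaysBelowAfter (walk m v) N 0 then 1 else 0
  calc (N : ℝ) * ∑ v : ZMod N → Bool with StaysBelowAfter (walk m v) N 0, wordWeight p v
      = ∑ j ∈ range N, ∑ v : ZMod N → Bool,
          wordWeight p v * if StaysBelowAfter (walk m v) N 0 then 1 else 0 := by
        simp [sum_filter]
    _ = ∑ j ∈ range N, ∑ v : ZMod N → Bool,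
          wordWeight p v * if StaysBelowAfter (walk m v) N j then 1 else 0 :=
        sum_congr rfl fun j _ => (hrot j).symm
    _ = _ := by
        rw [sum_comm]
        simp_rw [card_filter, Nat.cast_sum, mul_sum, Nat.cast_ite, Nat.cast_one, Nat.cast_zero]

lemma sum_wordWeight_staysBelowAfter_le {m : ℕ} {p : ℝ} (hpm : p * m = 1) (hp₀ : 0 ≤ p)
    (hp₁ : p ≤ 1) :
    ∑ v : ZMod N → Bool with StaysBelowAfter (walk m v) N 0, wordWeight p v ≤ √(m - 1) / √N := by
  have hW := wordWeight_nonneg (ι := ZMod N) hp₀ hp₁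
  have hcount : (N : ℝ) * ∑ v : ZMod N → Bool with StaysBelowAfter (walk m v) N 0, wordWeight p v
      ≤ ∑ v : ZMod N → Bool, wordWeight p v * |(walk m v N : ℝ)| := by
    rw [card_mul_sum_wordWeight_staysBelowAfter]
    exact sum_le_sum fun v _ =>
      mul_le_mul_of_nonneg_left (by exact_mod_cast card_staysBelowAfter_walk_le m v) (hW v)
  have hjensen : (∑ v : ZMod N → Bool, wordWeight p v * |(walk m v N : ℝ)|) ^ 2
      ≤ ∑ v : ZMod N → Bool, wordWeight p v * (walk m v N : ℝ) ^ 2 := by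
    simpa [sq_abs] using (convexOn_pow 2).map_sum_le (fun v _ => hW v) (sum_wordWeight p)
      (fun v _ => abs_nonneg (walk m v N : ℝ))
  have hvariance : ∑ v : ZMod N → Bool, wordWeight p v * (walk m v N : ℝ) ^ 2 = N * (m - 1) := by
    have hmean : p * (step m true : ℝ) + (1 - p) * step m false = 0 := by
      simp [step]; linear_combination hpm
    simp_rw [walk_eq_sum, Int.cast_sum]
    refine (sum_wordWeight_mul_sum_sq (f := fun b => (step m b : ℝ)) hmean).trans ?_
    rw [ZMod.card]
    congr 1
    simp only [step, if_true, Bool.false_eq_true, if_false]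
    push_cast
    linear_combination ((m : ℝ) - 2) * hpm
  have hsqrtN : 0 < √(N : ℝ) := Real.sqrt_pos.2 (by simp [NeZero.pos N])
  rw [le_div_iff₀ hsqrtN]
  refine le_of_mul_le_mul_left ?_ hsqrtN
  calc √(N : ℝ) * (_ * √N) = N * ∑ v : ZMod N → Bool with StaysBelowAfter (walk m v) N 0,
      wordWeight p v := by
        rw [mul_comm _ √(N : ℝ), ← mul_assoc, Real.mul_self_sqrt (Nat.cast_nonneg N)]
    _ ≤ √(N * (m - 1)) := hcount.trans (Real.le_sqrt_of_sq_le (hvariance ▸ hjensen))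
    _ = √N * √(m - 1) := Real.sqrt_mul (Nat.cast_nonneg N) _

end Ballot

def word (N : ℕ) (ω : ℤ → Bool) : ZMod N → Bool := fun i => ω i.val

lemma sum_step (m : ℕ) (ω : ℤ → Bool) (s : Finset ℤ) :
    ∑ k ∈ s, step m (ω k) = ((m : ℤ) - 1) * #{k ∈ s | ω k = true} - #{k ∈ s | ω k = false} := by
  simp [step, sum_ite, mul_comm]
  ring

lemma walk_word {m n t : ℕ} (ω : ℤ → Bool) (ht : t ≤ n) :
    walk m (word (n + 1) ω) (t + 1) = ∑ k ∈ Icc (0 : ℤ) t, step m (ω k) := by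
  rw [Int.Icc_eq_finset_map, sum_map]
  simp only [walk, word]
  refine sum_congr (by simp) fun i hi => ?_
  rw [ZMod.val_natCast, Nat.mod_eq_of_lt (by simp at hi; omega)]
  simp

lemma staysBelowAfter_walk_word {m n : ℕ} (hm : 1 ≤ m) {ω : ℤ → Bool}
    (hn : n < sInf {t : ℕ | #{k ∈ Icc (0 : ℤ) t | ω k = false}
      ≤ (m - 1) * #{k ∈ Icc (0 : ℤ) t | ω k = true}}) :
    StaysBelowAfter (walk m (word (n + 1) ω)) (n + 1) 0 := by
  rintro (_ | t) ht
  · simp at ht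
  have hnot := Nat.notMem_of_lt_sInf (hn.trans_le' (by simp at ht; omega))
  simp only [Set.mem_ofPred_eq, not_le] at hnot
  have hcast : (((m - 1) * #{k ∈ Icc (0 : ℤ) t | ω k = true} : ℕ) : ℤ)
      = ((m : ℤ) - 1) * #{k ∈ Icc (0 : ℤ) t | ω k = true} := by
    push_cast [Nat.cast_sub hm]; ring
  rw [zero_add, walk_word ω (by simp at ht; omega), sum_step]
  simp only [walk, range_zero, sum_empty]
  omega

def IsBernoulliProduct (p : ℝ) (μ : Measure (ℤ → Bool)) : Prop :=
  ∀ (s : Finset ℤ) (f : ℤ → Bool),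
    μ {ω | ∀ i ∈ s, ω i = f i} = ∏ i ∈ s, (if f i then ENNReal.ofReal p else ENNReal.ofReal (1 - p))

section Coins

variable {p : ℝ} {μ : Measure (ℤ → Bool)}

lemma measurable_word (N : ℕ) : Measurable (word N) :=
  measurable_pi_lambda _ fun _ => measurable_pi_apply _

lemma IsBernoulliProduct.measure_word_preimage_singleton (hμ : IsBernoulliProduct p μ)
    (hp₀ : 0 ≤ p) (hp₁ : p ≤ 1) {N : ℕ} [NeZero N] (v : ZMod N → Bool) :
    μ (word N ⁻¹' {v}) = ENNReal.ofReal (wordWeight p v) := by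
  let e : ZMod N ↪ ℤ := ⟨fun i => i.val, fun a b h => ZMod.val_injective N (Nat.cast_injective h)⟩
  have he (i : ZMod N) : e i = i.val := rfl
  have hcyl : word N ⁻¹' {v} = {ω | ∀ k ∈ univ.map e, ω k = v (k.toNat : ZMod N)} := by
    ext ω
    simp only [Set.mem_preimage, Set.mem_singleton_iff, Set.mem_ofPred_eq, forall_mem_map, mem_univ,
      forall_const, word, he, funext_iff, Int.toNat_natCast, ZMod.natCast_zmod_val]
  rw [hcyl, hμ, prod_map, wordWeight,
    ENNReal.ofReal_prod_of_nonneg fun i _ => coinWeight_nonneg hp₀ hp₁ _]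
  refine prod_congr rfl fun i _ => ?_
  simp only [he, Int.toNat_natCast, ZMod.natCast_zmod_val, coinWeight, apply_ite ENNReal.ofReal]

lemma IsBernoulliProduct.measure_word_preimage (hμ : IsBernoulliProduct p μ) (hp₀ : 0 ≤ p)
    (hp₁ : p ≤ 1) {N : ℕ} [NeZero N] (A : Finset (ZMod N → Bool)) :
    μ (word N ⁻¹' A) = ENNReal.ofReal (∑ v ∈ A, wordWeight p v) := by
  rw [← sum_measure_preimage_singleton A fun v _ => measurable_word N (measurableSet_singleton v),
    ENNReal.ofReal_sum_of_nonneg fun v _ => wordWeight_nonneg hp₀ hp₁ v]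
  exact sum_congr rfl fun v _ => hμ.measure_word_preimage_singleton hp₀ hp₁ v

lemma IsBernoulliProduct.measure_coord_eq_false (hμ : IsBernoulliProduct p μ) (i : ℤ) :
    μ {ω | ω i = false} = ENNReal.ofReal (1 - p) := by
  simpa using hμ {i} fun _ => false

lemma IsBernoulliProduct.isProbabilityMeasure_cond (hμ : IsBernoulliProduct p μ) (hp₁ : p < 1) :
    IsProbabilityMeasure μ[|{ω | ω 0 = false}] :=
  cond_isProbabilityMeasure_of_finite (by simp [hμ.measure_coord_eq_false, hp₁])
    (by simp [hμ.measure_coord_eq_false])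

lemma IsBernoulliProduct.cond_le (hμ : IsBernoulliProduct p μ) (hp₁ : p < 1) (A : Set (ℤ → Bool)) :
    μ[A | {ω | ω 0 = false}] ≤ ENNReal.ofReal (1 - p)⁻¹ * μ A := by
  rw [cond_apply (measurableSet_eq_fun (measurable_pi_apply 0) measurable_const),
    hμ.measure_coord_eq_false, ← ENNReal.ofReal_inv_of_pos (by linarith)]
  gcongr
  exact Set.inter_subset_right

lemma IsBernoulliProduct.measure_staysBelowAfter_le {m : ℕ} (hμ : IsBernoulliProduct p μ)
    (hpm : p * m = 1) (hp₀ : 0 ≤ p) (hp₁ : p ≤ 1) (N : ℕ) [NeZero N] :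
    μ (word N ⁻¹' {v | StaysBelowAfter (walk m v) N 0})
      ≤ ENNReal.ofReal (√(m - 1) / √N) := by
  rw [← coe_filter_univ, hμ.measure_word_preimage hp₀ hp₁]
  exact ENNReal.ofReal_le_ofReal (sum_wordWeight_staysBelowAfter_le hpm hp₀ hp₁)

lemma IsBernoulliProduct.cond_staysBelowAfter_le {m : ℕ} (hμ : IsBernoulliProduct p μ)
    (hpm : p * m = 1) (hp₀ : 0 ≤ p) (hp₁ : p < 1) (N : ℕ) [NeZero N] :
    μ[word N ⁻¹' {v | StaysBelowAfter (walk m v) N 0} | {ω | ω 0 = false}]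
      ≤ ENNReal.ofReal ((1 - p)⁻¹ * √(m - 1) / √N) :=
  calc _ ≤ ENNReal.ofReal (1 - p)⁻¹ * ENNReal.ofReal (√(m - 1) / √N) :=
        (hμ.cond_le hp₁ _).trans (by gcongr; exact hμ.measure_staysBelowAfter_le hpm hp₀ hp₁.le N)
    _ = _ := by rw [← ENNReal.ofReal_mul (inv_nonneg.2 (by linarith)), mul_div_assoc]

end Coins

end ExtraHead

theorem extra_head_greedy_finite_moments_general (m : ℕ) (hm : 2 ≤ m) (p : ℝ) (hp : p = 1 / m)
    (μ : Measure (ℤ → Bool))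
    (hμ : ∀ (s : Finset ℤ) (f : ℤ → Bool),
      μ {ω | ∀ i ∈ s, ω i = f i}
        = ∏ i ∈ s, (if f i then ENNReal.ofReal p else ENNReal.ofReal (1 - p)))
    (μ₀ : Measure (ℤ → Bool)) (hμ₀ : μ₀ = μ[|{ω | ω 0 = false}])
    (T : (ℤ → Bool) → ℕ)
    (hT : ∀ ω, T ω = sInf {t : ℕ |
      ((Finset.Icc (0 : ℤ) t).filter (fun k => ω k = false)).card
        ≤ (m - 1) * ((Finset.Icc (0 : ℤ) t).filter (fun k => ω k = true)).card}) :
    ∀ β : ℝ, 0 ≤ β → β < 1 / 2 →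
      ∫⁻ ω, (T ω : ℝ≥0∞) ^ β ∂μ₀ < ⊤ := by
  intro β hβ₀ hβ
  have hμ : ExtraHead.IsBernoulliProduct p μ := hμ
  have hm' : (2 : ℝ) ≤ m := by exact_mod_cast hm
  have hpm : p * m = 1 := by rw [hp]; field_simp
  have hp₀ : 0 ≤ p := by rw [hp]; positivity
  have hp₁ : p < 1 := by rw [hp, div_lt_one (by linarith)]; linarith
  have : IsProbabilityMeasure μ₀ := hμ₀ ▸ hμ.isProbabilityMeasure_cond hp₁
  refine ExtraHead.lintegral_rpow_lt_top_of_measure_le μ₀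
    (B := fun n => ExtraHead.word (n + 1) ⁻¹'
      {v | ExtraHead.StaysBelowAfter (ExtraHead.walk m v) (n + 1) 0})
    (fun n => ExtraHead.measurable_word _ (Set.toFinite _).measurableSet)
    (fun n ω hn => ExtraHead.staysBelowAfter_walk_word (by omega) (hT ω ▸ hn))
    (C := (1 - p)⁻¹ * √(m - 1)) (by positivity) (fun n => ?_) hβ₀ hβ
  rw [hμ₀]
  exact_mod_cast hμ.cond_staysBelowAfter_le hpm hp₀ hp₁ (n + 1)

/-- **Finite `β`-moments of the greedy extra head scheme for `β < 1/2`**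
(instance of Theorem 3(ii)).  Let `m ≥ 2`, `p = 1/m`, let `μ` be the law of a doubly
infinite i.i.d. Bernoulli(p) sequence of coins and `μ₀` its conditioning on
`{ω 0 = false}`.  With
`T ω = min {t ≥ 0 : #{k ∈ [0,t] : ω k = false} ≤ (m-1) · #{k ∈ [0,t] : ω k = true}}`,
one has `∫ T^β dμ₀ < ∞` for every `0 ≤ β < 1/2`. -/
theorem extra_head_greedy_finite_moments (m : ℕ) (hm : 2 ≤ m) (p : ℝ) (hp : p = 1 / m)
    (μ : Measure (ℤ → Bool)) [IsProbabilityMeasure μ]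
    (hμ : ∀ (s : Finset ℤ) (f : ℤ → Bool),
      μ {ω | ∀ i ∈ s, ω i = f i}
        = ∏ i ∈ s, (if f i then ENNReal.ofReal p else ENNReal.ofReal (1 - p)))
    (μ₀ : Measure (ℤ → Bool)) (hμ₀ : μ₀ = μ[|{ω | ω 0 = false}])
    (T : (ℤ → Bool) → ℕ)
    (hT : ∀ ω, T ω = sInf {t : ℕ |
      ((Finset.Icc (0 : ℤ) t).filter (fun k => ω k = false)).card
        ≤ (m - 1) * ((Finset.Icc (0 : ℤ) t).filter (fun k => ω k = true)).card}) :
    ∀ β : ℝ, 0 ≤ β → β < 1 / 2 →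
      ∫⁻ ω, (T ω : ℝ≥0∞) ^ β ∂μ₀ < ⊤ :=
  extra_head_greedy_finite_moments_general m hm p hp μ hμ μ₀ hμ₀ T hT
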